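/- arXiv:1512.05983 — 2 statements merged into one kernel-verified Lean document; each statement's English description precedes it below -/
import Mathlib

section
/- For all f, g ∈ L²([0,T),ℂ), the function h(x) := (1 - e^{-2λT})·e^{2λ·cut(x)}·(𝒜f)(x) on ℝ₊ satisfies ⟨h, 𝒜g⟩_{L²(ℝ₊)} = ⟨f, g⟩_{L²([0,T))}. Consequently, the adjoint of the inverse of 𝒜 (viewed as a bijection onto its range) is (𝒜⁻¹)*f (x)= (1 - e^{-2λT})·e^{2λ·cut(x)}·(𝒜f)(x). -/
/-!
Split `[0, ∞)` into the periods `[nT, (n+1)T)`. After the shift `x = y + nT` we have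
`cut x = y`, and the weights `e^{2λ cut x} e^{-λx} e^{-λx}` collapse to `q^n` with
`q = e^{-2λT} < 1`, so the `n`-th period contributes `(1 - q) q^n ⟨f, g⟩`. These sum to `⟨f, g⟩`.
-/

open MeasureTheory Complex

/-- `cut T x = x mod T`. -/
noncomputable def cut (T x : ℝ) : ℝ := x - T * ⌊x / T⌋

/-- The operator `𝒜`, `(𝒜 f)(x) = e^{-λ x} f(cut x)`. -/
noncomputable def Aop (T lm : ℝ) (f : ℝ → ℂ) : ℝ → ℂ :=
  fun x => Real.exp (-lm * x) • f (cut T x)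

/-- The candidate for `(𝒜⁻¹)* f`, namely `x ↦ (1 - e^{-2λT}) e^{2λ cut(x)} (𝒜f)(x)`. -/
noncomputable def AinvStar (T lm : ℝ) (f : ℝ → ℂ) : ℝ → ℂ :=
  fun x => ((1 - Real.exp (-2 * lm * T)) * Real.exp (2 * lm * cut T x)) • Aop T lm f x

open Set ComplexConjugate

section ShiftDecomposition

variable {E : Type*} [NormedAddCommGroup E] [NormedSpace ℝ E] {T : ℝ}

theorem iUnion_Ico_nat_mul (hT : 0 < T) : ⋃ n : ℕ, Ico (n * T) (n * T + T) = Ici 0 := by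
  have hunb : ¬BddAbove (range fun n : ℕ => (n : ℝ) * T) := by
    rintro ⟨b, hb⟩
    obtain ⟨n, hn⟩ := exists_nat_gt (b / T)
    linarith [hb ⟨n, rfl⟩, (div_lt_iff₀ hT).1 hn]
  simpa [add_mul] using iUnion_Ico_map_succ_eq_Ici (f := fun n : ℕ => (n : ℝ) * T)
    (fun n => by simp only [bot_eq_zero', Nat.cast_zero, zero_mul]; positivity) hunb

theorem pairwise_disjoint_Ico_nat_mul (hT : 0 < T) :
    Pairwise (Function.onFun Disjoint fun n : ℕ => Ico (n * T) (n * T + T)) := by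
  simpa [add_mul] using Monotone.pairwise_disjoint_on_Ico_succ (f := fun n : ℕ => (n : ℝ) * T)
    (fun m n h => mul_le_mul_of_nonneg_right (Nat.cast_le.2 h) hT.le)

theorem preimage_add_const_Ico_self (s : ℝ) : (· + s) ⁻¹' Ico s (s + T) = Ico 0 T := by
  simp

variable {F G : ℝ → E}

theorem integrableOn_Ico_add_of_shift_eq_smul {s c : ℝ} (hG : IntegrableOn G (Ico 0 T))
    (hF : ∀ y ∈ Ico 0 T, F (y + s) = c • G y) : IntegrableOn F (Ico s (s + T)) := by
  rw [← (measurePreserving_add_right volume s).integrableOn_comp_preimage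
    (measurableEmbedding_addRight s), preimage_add_const_Ico_self]
  exact IntegrableOn.congr_fun (hG.smul c) (fun y hy => (hF y hy).symm) measurableSet_Ico

theorem setIntegral_Ico_add_of_shift_eq_smul {s c : ℝ}
    (hF : ∀ y ∈ Ico 0 T, F (y + s) = c • G y) :
    ∫ x in Ico s (s + T), F x = c • ∫ y in Ico 0 T, G y := by
  rw [← (measurePreserving_add_right volume s).setIntegral_preimage_emb
    (measurableEmbedding_addRight s), preimage_add_const_Ico_self,
    setIntegral_congr_fun measurableSet_Ico hF, integral_smul]

variable {a : ℕ → ℝ}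

theorem integrableOn_Ici_of_shift_eq_smul (hT : 0 < T) (hG : IntegrableOn G (Ico 0 T))
    (ha : Summable a) (hF : ∀ n : ℕ, ∀ y ∈ Ico 0 T, F (y + n * T) = a n • G y) :
    IntegrableOn F (Ici 0) := by
  rw [← iUnion_Ico_nat_mul hT]
  refine integrableOn_iUnion_of_summable_integral_norm
    (fun n => integrableOn_Ico_add_of_shift_eq_smul hG (hF n)) ?_
  have hnorm : ∀ n : ℕ, ∀ y ∈ Ico 0 T, ‖F (y + n * T)‖ = |a n| • ‖G y‖ := fun n y hy => by
    rw [hF n y hy, norm_smul, Real.norm_eq_abs, smul_eq_mul]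
  simp_rw [fun n => setIntegral_Ico_add_of_shift_eq_smul (F := fun x => ‖F x‖) (hnorm n),
    smul_eq_mul]
  exact ha.abs.mul_right _

theorem setIntegral_Ici_eq_smul_of_shift_eq_smul (hT : 0 < T) (hG : IntegrableOn G (Ico 0 T))
    {σ : ℝ} (ha : HasSum a σ) (hF : ∀ n : ℕ, ∀ y ∈ Ico 0 T, F (y + n * T) = a n • G y) :
    ∫ x in Ici 0, F x = σ • ∫ y in Ico 0 T, G y := by
  have hFint := integrableOn_Ici_of_shift_eq_smul hT hG ha.summable hF
  rw [← iUnion_Ico_nat_mul hT] at hFint ⊢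
  refine (hasSum_integral_iUnion (fun _ => measurableSet_Ico) (pairwise_disjoint_Ico_nat_mul hT)
    hFint).unique ?_
  simpa only [setIntegral_Ico_add_of_shift_eq_smul (hF _)] using ha.smul_const _

end ShiftDecomposition

theorem hasSum_one_sub_mul_geometric {c : ℝ} (h0 : 0 ≤ c) (h1 : c < 1) :
    HasSum (fun n : ℕ => (1 - c) * c ^ n) 1 := by
  simpa [mul_inv_cancel₀ (sub_ne_zero.2 h1.ne')] using
    (hasSum_geometric_of_lt_one h0 h1).mul_left (1 - c)

theorem cut_add_nat_mul {T y : ℝ} (hT : 0 < T) (hy : y ∈ Ico 0 T) (n : ℕ) :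
    cut T (y + n * T) = y := by
  have hfloor : ⌊(y + n * T) / T⌋ = n := by
    rw [add_div, mul_div_cancel_right₀ _ hT.ne', Int.floor_add_natCast,
      Int.floor_eq_zero_iff.2 ⟨div_nonneg hy.1 hT.le, (div_lt_one hT).2 hy.2⟩, zero_add]
  simp only [cut, hfloor, Int.cast_natCast]
  ring

theorem AinvStar_mul_conj_Aop_add_nat_mul {T y : ℝ} (lm : ℝ) (hT : 0 < T) (f g : ℝ → ℂ)
    (hy : y ∈ Ico 0 T) (n : ℕ) :
    AinvStar T lm f (y + n * T) * conj (Aop T lm g (y + n * T)) =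
      ((1 - Real.exp (-2 * lm * T)) * Real.exp (-2 * lm * T) ^ n) • (f y * conj (g y)) := by
  have hexp : Real.exp (2 * lm * y) * Real.exp (-lm * (y + n * T)) * Real.exp (-lm * (y + n * T))
      = Real.exp (-2 * lm * T) ^ n := by
    rw [← Real.exp_add, ← Real.exp_add, ← Real.exp_nat_mul]
    ring_nf
  simp only [AinvStar, Aop, cut_add_nat_mul hT hy, real_smul, map_mul, conj_ofReal, ← hexp]
  push_cast
  ring

/-- for all `f, g ∈ L²([0,T),ℂ)`, the function
`h(x) = (1 - e^{-2λT}) e^{2λ cut(x)} (𝒜f)(x)` satisfies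
`⟨h, 𝒜g⟩_{L²(ℝ₊)} = ⟨f, g⟩_{L²([0,T))}`; consequently `h` represents `(𝒜⁻¹)* f`,
i.e. the adjoint of the inverse of `𝒜 : L²([0,T)) → ran 𝒜` applied to `f`. -/
theorem stmt_2 (T lm : ℝ) (hT : 0 < T) (hl : 0 < lm)
    (f g : ℝ → ℂ)
    (hf : MemLp f 2 (volume.restrict (Set.Ico 0 T)))
    (hg : MemLp g 2 (volume.restrict (Set.Ico 0 T))) :
    (∫ x in Set.Ici (0:ℝ), AinvStar T lm f x * (starRingEnd ℂ) (Aop T lm g x))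
      = ∫ x in Set.Ico 0 T, f x * (starRingEnd ℂ) (g x) := by
  have hc : Real.exp (-2 * lm * T) < 1 := Real.exp_lt_one_iff.2 (by nlinarith)
  have hfg : IntegrableOn (fun y => f y * conj (g y)) (Ico 0 T) := hf.integrable_mul hg.star
  simpa only [one_smul] using setIntegral_Ici_eq_smul_of_shift_eq_smul hT hfg
    (hasSum_one_sub_mul_geometric (Real.exp_pos _).le hc)
    (fun n y hy => AinvStar_mul_conj_Aop_add_nat_mul lm hT f g hy n)
end

section
/- For any two elements h, g in the range of 𝒜 ⊂ L²(ℝ₊,ℂ), the L²(ℝ₊) inner product equals (1 − e^{-2λT})⁻¹ times the inner product of their restrictions to [0,T]: ⟨h, g⟩_{L²(ℝ₊)} = (1 − e^{-2λT})⁻¹ ∫₀^T h(x) conj(g(x)) dx. -/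
/-!
With `F x = 𝒜f(x) · conj (𝒜g(x))`, the shift `x ↦ x + T` leaves `x mod T` unchanged, so
`F (x + T) = e^{-2λT} F x`. On the block `[nT, (n+1)T)` the integral of `F` (and of `‖F‖`) is
therefore `e^{-2λnT}` times the one over `[0, T)`; summing the geometric series over the blocks
gives both integrability on `[0, ∞)` and the factor `(1 - e^{-2λT})⁻¹`.
-/

open MeasureTheory Complex

open Set Function
open scoped ENNReal

lemma iUnion_Ico_add_nat_mul (a : ℝ) {T : ℝ} (hT : 0 < T) :
    ⋃ n : ℕ, Ico (a + n * T) (a + (n + 1) * T) = Ici a := by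
  refine Subset.antisymm (iUnion_subset fun n x hx => ?_) fun x (hx : a ≤ x) => ?_
  · exact le_trans (by simp only [le_add_iff_nonneg_right]; positivity) hx.1
  · have hq : 0 ≤ (x - a) / T := div_nonneg (sub_nonneg.2 hx) hT.le
    refine mem_iUnion.2 ⟨⌊(x - a) / T⌋₊, ?_, ?_⟩
    · have := (le_div_iff₀ hT).1 (Nat.floor_le hq)
      linarith
    · have := (div_lt_iff₀ hT).1 (Nat.lt_floor_add_one ((x - a) / T))
      linarith

lemma pairwise_disjoint_Ico_add_nat_mul (a T : ℝ) :
    Pairwise (Disjoint on fun n : ℕ => Ico (a + n * T) (a + (n + 1) * T)) := by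
  intro m n hmn
  simpa [zsmul_eq_mul] using
    pairwise_disjoint_Ico_add_zsmul a T (Nat.cast_injective.ne hmn : (m : ℤ) ≠ n)

section QuasiPeriodic

variable {E : Type*} [NormedAddCommGroup E] [NormedSpace ℝ E] {F : ℝ → E} {a T r : ℝ}

lemma pow_smul_of_add_eq_smul (hT : 0 ≤ T) (hF : ∀ x, a ≤ x → F (x + T) = r • F x)
    (n : ℕ) {x : ℝ} (hx : a ≤ x) : F (x + n * T) = r ^ n • F x := by
  induction n with
  | zero => simp
  | succ n ih =>
    have hxn : a ≤ x + n * T := le_add_of_le_of_nonneg hx (by positivity)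
    rw [Nat.cast_succ, add_one_mul, ← add_assoc, hF _ hxn, ih, pow_succ', mul_smul]

lemma preimage_add_nat_mul_Ico (a T : ℝ) (n : ℕ) :
    (· + n * T) ⁻¹' Ico (a + n * T) (a + (n + 1) * T) = Ico a (a + T) := by
  rw [preimage_add_const_Ico]
  ring_nf

lemma setIntegral_Ico_add_nat_mul (hT : 0 ≤ T) (hF : ∀ x, a ≤ x → F (x + T) = r • F x)
    (n : ℕ) :
    ∫ x in Ico (a + n * T) (a + (n + 1) * T), F x = r ^ n • ∫ x in Ico a (a + T), F x := by
  rw [← (measurePreserving_add_right volume (n * T)).setIntegral_preimage_emb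
    (measurableEmbedding_addRight _), preimage_add_nat_mul_Ico,
    setIntegral_congr_fun measurableSet_Ico fun x hx => pow_smul_of_add_eq_smul hT hF n hx.1]
  exact integral_smul _ _

lemma integrableOn_Ico_add_nat_mul (hT : 0 ≤ T) (hF : ∀ x, a ≤ x → F (x + T) = r • F x)
    (hint : IntegrableOn F (Ico a (a + T))) (n : ℕ) :
    IntegrableOn F (Ico (a + n * T) (a + (n + 1) * T)) := by
  rw [← (measurePreserving_add_right volume (n * T)).integrableOn_comp_preimage
    (measurableEmbedding_addRight _), preimage_add_nat_mul_Ico]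
  exact IntegrableOn.congr_fun (hint.smul (r ^ n))
    (fun x hx => (pow_smul_of_add_eq_smul hT hF n hx.1).symm) measurableSet_Ico

theorem integrableOn_Ici_of_add_eq_smul (hT : 0 < T) (hr₀ : 0 ≤ r) (hr₁ : r < 1)
    (hF : ∀ x, a ≤ x → F (x + T) = r • F x) (hint : IntegrableOn F (Ico a (a + T))) :
    IntegrableOn F (Ici a) := by
  have hnorm : ∀ x, a ≤ x → ‖F (x + T)‖ = r • ‖F x‖ := fun x hx => by
    rw [hF x hx, norm_smul, Real.norm_of_nonneg hr₀, smul_eq_mul]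
  rw [← iUnion_Ico_add_nat_mul a hT]
  refine integrableOn_iUnion_of_summable_integral_norm
    (integrableOn_Ico_add_nat_mul hT.le hF hint) ?_
  simp_rw [setIntegral_Ico_add_nat_mul (F := fun x => ‖F x‖) hT.le hnorm, smul_eq_mul]
  exact (summable_geometric_of_lt_one hr₀ hr₁).mul_right _

theorem setIntegral_Ici_of_add_eq_smul (hT : 0 < T) (hr₀ : 0 ≤ r) (hr₁ : r < 1)
    (hF : ∀ x, a ≤ x → F (x + T) = r • F x) (hint : IntegrableOn F (Ico a (a + T))) :
    ∫ x in Ici a, F x = (1 - r)⁻¹ • ∫ x in Ico a (a + T), F x := by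
  have hIci := integrableOn_Ici_of_add_eq_smul hT hr₀ hr₁ hF hint
  rw [← iUnion_Ico_add_nat_mul a hT] at hIci ⊢
  rw [integral_iUnion (fun _ => measurableSet_Ico) (pairwise_disjoint_Ico_add_nat_mul a T) hIci]
  simp_rw [setIntegral_Ico_add_nat_mul hT.le hF]
  rw [(summable_geometric_of_lt_one hr₀ hr₁).tsum_smul_const,
    tsum_geometric_of_lt_one hr₀ hr₁]

end QuasiPeriodic

lemma cut_add_self (T x : ℝ) : cut T (x + T) = cut T x := by
  rcases eq_or_ne T 0 with rfl | hT
  · simp [cut]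
  · rw [cut, cut, add_div, div_self hT, Int.floor_add_one]
    push_cast
    ring

lemma cut_of_mem_Ico {T x : ℝ} (hT : 0 < T) (hx : x ∈ Ico 0 T) : cut T x = x := by
  have : ⌊x / T⌋ = 0 :=
    Int.floor_eq_zero_iff.2 ⟨div_nonneg hx.1 hT.le, (div_lt_one hT).2 hx.2⟩
  simp [cut, this]

lemma Aop_add_self (T lm : ℝ) (f : ℝ → ℂ) (x : ℝ) :
    Aop T lm f (x + T) = Real.exp (-lm * T) • Aop T lm f x := by
  rw [Aop, Aop, cut_add_self, smul_smul, ← Real.exp_add]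
  ring_nf

lemma Aop_mul_conj_add_self (T lm : ℝ) (f g : ℝ → ℂ) (x : ℝ) :
    Aop T lm f (x + T) * starRingEnd ℂ (Aop T lm g (x + T)) =
      Real.exp (-2 * lm * T) • (Aop T lm f x * starRingEnd ℂ (Aop T lm g x)) := by
  have hexp : Real.exp (-2 * lm * T) = Real.exp (-lm * T) * Real.exp (-lm * T) := by
    rw [← Real.exp_add]
    ring_nf
  simp only [Aop_add_self, Complex.real_smul, map_mul, Complex.conj_ofReal, hexp]
  push_cast
  ring

lemma memLp_Aop {T lm : ℝ} (hT : 0 < T) (hl : 0 ≤ lm) {f : ℝ → ℂ} {p : ℝ≥0∞}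
    (hf : MemLp f p (volume.restrict (Ico 0 T))) :
    MemLp (Aop T lm f) p (volume.restrict (Ico 0 T)) := by
  have hexp : MemLp (fun x => Real.exp (-lm * x)) ⊤ (volume.restrict (Ico 0 T)) := by
    refine memLp_top_of_bound (by fun_prop) 1 ((ae_restrict_iff' measurableSet_Ico).2 ?_)
    refine .of_forall fun x hx => ?_
    rw [Real.norm_of_nonneg (Real.exp_pos _).le, Real.exp_le_one_iff]
    nlinarith [hx.1]
  refine (hf.smul hexp).ae_eq ((ae_restrict_iff' measurableSet_Ico).2 (.of_forall fun x hx => ?_))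
  simp [Aop, cut_of_mem_Ico hT hx]

/-- for `h, g ∈ ran 𝒜 ⊆ L²(ℝ₊,ℂ)`, the `L²(ℝ₊)` inner product equals
`(1-e^{-2λT})⁻¹` times the inner product of the restrictions to `[0,T]`. -/
theorem stmt_14 (T lm : ℝ) (hT : 0 < T) (hl : 0 < lm)
    (f g : ℝ → ℂ)
    (hf : MemLp f 2 (volume.restrict (Set.Ico 0 T)))
    (hg : MemLp g 2 (volume.restrict (Set.Ico 0 T))) :
    (∫ x in Set.Ici (0:ℝ), Aop T lm f x * (starRingEnd ℂ) (Aop T lm g x))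
      = (1 - Real.exp (-2 * lm * T))⁻¹ •
          ∫ x in Set.Ico 0 T, Aop T lm f x * (starRingEnd ℂ) (Aop T lm g x) := by
  have hr : Real.exp (-2 * lm * T) < 1 := Real.exp_lt_one_iff.2 (by nlinarith)
  have hint : IntegrableOn (fun x => Aop T lm f x * starRingEnd ℂ (Aop T lm g x)) (Ico 0 T) :=
    (memLp_Aop hT hl.le hf).integrable_mul (memLp_Aop hT hl.le hg).star
  simpa only [zero_add] using setIntegral_Ici_of_add_eq_smul (a := 0)
    (F := fun x => Aop T lm f x * starRingEnd ℂ (Aop T lm g x)) hT (Real.exp_pos _).le hr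
    (fun x _ => Aop_mul_conj_add_self T lm f g x) (by rwa [zero_add])
end
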